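/- arXiv:2004.07128 — 2 statements merged into one kernel-verified Lean document; each statement's English description precedes it below -/
import Mathlib

section
/- For the ECA rule 32, with local rule h(a,b,c) = a ∧ ¬b ∧ c, and for every n ≥ 3: for every block-sequential update schedule τ, every configuration x and every cell i ∈ ℤ/nℤ, one has f^{(τ)}(x)_i = true if and only if lab_τ((i+1,i)) = ⊕ and lab_τ((i−1,i)) = ⊕ and (x_{i−1}, x_i, x_{i+1}) = (true, false, true). -/
/-- One round of a block-sequential update: all cells of rank `k` are updated
simultaneously by the ECA local rule `h`, reading the current states. -/
def ecaStep (n : ℕ) (h : Bool → Bool → Bool → Bool) (τ : ZMod n → ℕ) (k : ℕ)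
    (x : ZMod n → Bool) : ZMod n → Bool :=
  fun i => if τ i = k then h (x (i - 1)) (x i) (x (i + 1)) else x i

/-- State after processing ranks `0, 1, …, k` in increasing order. -/
def ecaUpTo (n : ℕ) (h : Bool → Bool → Bool → Bool) (τ : ZMod n → ℕ) :
    ℕ → (ZMod n → Bool) → ZMod n → Bool
  | 0 => ecaStep n h τ 0
  | k + 1 => fun x => ecaStep n h τ (k + 1) (ecaUpTo n h τ k x)

/-- Asynchronous global function `f^{(τ)}` for the block-sequential update
schedule `τ : ZMod n → ℕ` (rank of each cell): a cell keeps the value it gets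
in the round where it is updated (it is never updated again afterwards). -/
def ecaAsync (n : ℕ) (h : Bool → Bool → Bool → Bool) (τ : ZMod n → ℕ)
    (x : ZMod n → Bool) : ZMod n → Bool :=
  fun i => ecaUpTo n h τ (τ i) x i

/-- Synchronous global function of the ECA with local rule `h`. -/
def ecaSync (n : ℕ) (h : Bool → Bool → Bool → Bool) (x : ZMod n → Bool) :
    ZMod n → Bool :=
  fun i => h (x (i - 1)) (x i) (x (i + 1))

/-- Label of the arc `(i, j)` for schedule `τ`:
`true` = ⊕ (τ i ≥ τ j), `false` = ⊖ (τ i < τ j). -/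
def lab (n : ℕ) (τ : ZMod n → ℕ) (i j : ZMod n) : Bool :=
  decide (τ j ≤ τ i)

/-! Cell `i` is updated once, at round `τ i`, and then reads `x j` from a neighbour `j` with
`τ j ≥ τ i` but the final value `f^{(τ)}(x)_j` from a neighbour with `τ j < τ i`. For rule 32 an
earlier neighbour cannot help: if it became `true`, it read cell `i` as the still untouched
`x i = true`, and then cell `i` itself reads its own `true` and becomes `false`. -/

section BlockSequential

variable {n : ℕ} (h : Bool → Bool → Bool → Bool) (τ : ZMod n → ℕ) (x : ZMod n → Bool)

theorem ecaUpTo_apply (k : ℕ) (j : ZMod n) :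
    ecaUpTo n h τ k x j = if τ j ≤ k then ecaAsync n h τ x j else x j := by
  induction k with
  | zero =>
    by_cases hj : τ j = 0 <;> simp [ecaUpTo, ecaStep, ecaAsync, hj]
  | succ k ih =>
    rcases lt_trichotomy (τ j) (k + 1) with hlt | heq | hgt
    · have hle : τ j ≤ k := by omega
      simp [ecaUpTo, ecaStep, hlt.ne, hle, hlt.le, ih]
    · simp [ecaAsync, heq]
    · have hle : ¬τ j ≤ k := by omega
      simp [ecaUpTo, ecaStep, hgt.ne', hle, hgt.not_ge, ih]

theorem ecaAsync_apply (i : ZMod n) :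
    ecaAsync n h τ x i =
      h (if τ (i - 1) < τ i then ecaAsync n h τ x (i - 1) else x (i - 1)) (x i)
        (if τ (i + 1) < τ i then ecaAsync n h τ x (i + 1) else x (i + 1)) := by
  rcases hi : τ i with _ | k
  · simp [ecaAsync, ecaUpTo, ecaStep, hi]
  · have hstep : ecaAsync n h τ x i =
        h (ecaUpTo n h τ k x (i - 1)) (ecaUpTo n h τ k x i) (ecaUpTo n h τ k x (i + 1)) := by
      simp [ecaAsync, hi, ecaUpTo, ecaStep]
    rw [hstep, ecaUpTo_apply h τ x k i, if_neg (by omega), ecaUpTo_apply, ecaUpTo_apply]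
    simp only [Nat.lt_succ_iff]

end BlockSequential

abbrev rule32 : Bool → Bool → Bool → Bool := fun a b c => a && !b && c

theorem rule32_eq_true_iff (a b c : Bool) :
    rule32 a b c = true ↔ a = true ∧ b = false ∧ c = true := by
  cases a <;> cases b <;> cases c <;> decide

section Rule32

variable {n : ℕ} (τ : ZMod n → ℕ) (x : ZMod n → Bool) (i : ZMod n)

theorem ecaAsync_rule32_eq_false_of_left_lt (hlt : τ (i - 1) < τ i) :
    ecaAsync n rule32 τ x i = false := by
  rw [ecaAsync_apply, if_pos hlt, Bool.eq_false_iff]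
  intro hi
  obtain ⟨hl, hxi, -⟩ := (rule32_eq_true_iff _ _ _).1 hi
  rw [ecaAsync_apply, sub_add_cancel, if_neg hlt.not_gt, rule32_eq_true_iff] at hl
  rw [hl.2.2] at hxi
  exact Bool.noConfusion hxi

theorem ecaAsync_rule32_eq_false_of_right_lt (hlt : τ (i + 1) < τ i) :
    ecaAsync n rule32 τ x i = false := by
  rw [ecaAsync_apply, if_pos hlt, Bool.eq_false_iff]
  intro hi
  obtain ⟨-, hxi, hr⟩ := (rule32_eq_true_iff _ _ _).1 hi
  rw [ecaAsync_apply, add_sub_cancel_right, if_neg hlt.not_gt, rule32_eq_true_iff] at hr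
  rw [hr.1] at hxi
  exact Bool.noConfusion hxi

end Rule32

theorem rule_32_characterization_general (n : ℕ) (τ : ZMod n → ℕ)
    (x : ZMod n → Bool) (i : ZMod n) :
    ecaAsync n (fun a b c => a && !b && c) τ x i = true ↔
      (lab n τ (i + 1) i = true ∧ lab n τ (i - 1) i = true ∧
        x (i - 1) = true ∧ x i = false ∧ x (i + 1) = true) := by
  change ecaAsync n rule32 τ x i = true ↔ _
  simp only [lab, decide_eq_true_iff]
  by_cases hl : τ (i - 1) < τ i
  · simp [ecaAsync_rule32_eq_false_of_left_lt τ x i hl, hl]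
  by_cases hr : τ (i + 1) < τ i
  · simp [ecaAsync_rule32_eq_false_of_right_lt τ x i hr, hr]
  rw [ecaAsync_apply, if_neg hl, if_neg hr, rule32_eq_true_iff]
  simp [not_lt.1 hl, not_lt.1 hr]

/-- Rule 32 (h a b c = a ∧ ¬b ∧ c): characterization of when a cell is
updated to  under any block-sequential schedule. -/
theorem rule_32_characterization (n : ℕ) (hn : 3 ≤ n) (τ : ZMod n → ℕ)
    (x : ZMod n → Bool) (i : ZMod n) :
    ecaAsync n (fun a b c => a && !b && c) τ x i = true ↔
      (lab n τ (i + 1) i = true ∧ lab n τ (i - 1) i = true ∧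
        x (i - 1) = true ∧ x i = false ∧ x (i + 1) = true) :=
  rule_32_characterization_general n τ x i
end

section
/- For the ECA rule 128, with local rule h(a,b,c) = a ∧ b ∧ c, and for every n > 6: if τ and τ' form a special pair (i.e. lab_τ ≠ lab_τ' but f^{(τ)} = f^{(τ')}), then the labelings lab_τ and lab_τ' differ on exactly one arc of the form (i,j) with j = i±1. -/
/-!
For rule 128, the new state of cell `i` is the conjunction of `x` over a window: follow the
strictly descending run of `τ` from `i` in each direction and go one cell further. Equal global
functions therefore give equal windows at every cell, and a window that is not the whole ring
determines both run lengths, hence which neighbours of `i` are updated before `i`.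

Compare the two schedules on an edge `(i, i + d)` whose labels differ. If `τ` descends there
while `τ'` ascends, the window of `i` is the whole ring for `τ'`, so `τ'` climbs along the
`n - 3` edges from `i + 3d` round to `i`; the same happens at `i + 3d`, which forces `τ'` to
climb from `i` to `i + 3d` as well, impossible on a ring. If `τ` descends and `τ'` is flat,
both schedules climb along the `n - 3` edges into `i`, and the two remaining edges are seen from
cells with proper windows, so every other edge agrees and only the arc `(i + d, i)` changes its
label.
-/

namespace ECA

variable {n : ℕ}

section Arithmetic

variable {d : ZMod n}

lemma neg_eq_one_or_neg_one (hd : d = 1 ∨ d = -1) : -d = 1 ∨ -d = -1 := by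
  rcases hd with rfl | rfl <;> simp

lemma natCast_sub_eq_neg {m : ℕ} (hm : m ≤ n) : ((n - m : ℕ) : ZMod n) = -m := by
  rw [Nat.cast_sub hm, ZMod.natCast_self, zero_sub]

lemma natCast_mul_ne_zero (hd : d = 1 ∨ d = -1) {m : ℕ} (h0 : 0 < m) (hm : m < n) :
    (m : ZMod n) * d ≠ 0 := by
  have hu : IsUnit d := by rcases hd with rfl | rfl <;> simp
  rw [Ne, hu.mul_left_eq_zero, ZMod.natCast_eq_zero_iff]
  exact fun hdvd => absurd (Nat.le_of_dvd h0 hdvd) (by omega)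

lemma exists_eq_add_mul [NeZero n] (hd : d = 1 ∨ d = -1) (i c : ZMod n) :
    ∃ m < n, c = i + m * d := by
  refine ⟨((c - i) * d).val, ZMod.val_lt _, ?_⟩
  rw [ZMod.natCast_zmod_val]
  rcases hd with rfl | rfl <;> ring

end Arithmetic

/-- The bound `n` of the search is never reached (`descRun_lt`). -/
def descRun (τ : ZMod n → ℕ) (d i : ZMod n) : ℕ :=
  Nat.findGreatest (fun m => ∀ k < m, τ (i + (k + 1) * d) < τ (i + k * d)) n

section DescRun

variable {τ : ZMod n → ℕ} {d i c c' : ZMod n}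

lemma desc_of_lt_descRun {k : ℕ} (hk : k < descRun τ d i) (hc : i + k * d = c)
    (hc' : c + d = c') : τ c' < τ c := by
  have hrun := Nat.findGreatest_spec
    (P := fun m => ∀ k < m, τ (i + (k + 1) * d) < τ (i + k * d)) (Nat.zero_le n) (by simp)
  subst hc hc'
  simpa only [add_mul, one_mul, add_assoc] using hrun k hk

lemma le_descRun {m : ℕ} (hm : m ≤ n) (h : ∀ k < m, τ (i + (k + 1) * d) < τ (i + k * d)) :
    m ≤ descRun τ d i :=
  Nat.le_findGreatest hm h

lemma descRun_le_of_not_lt {k : ℕ} (h : ¬ τ c' < τ c) (hc : i + k * d = c) (hc' : c + d = c') :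
    descRun τ d i ≤ k :=
  not_lt.1 fun hk => h (desc_of_lt_descRun hk hc hc')

lemma add_le_of_le_descRun {m : ℕ} (hm : m ≤ descRun τ d i) (hc : i + m * d = c) :
    τ c + m ≤ τ i := by
  subst hc
  induction m with
  | zero => simp
  | succ m ih =>
    have := desc_of_lt_descRun (c' := i + ((m + 1 : ℕ) : ZMod n) * d) (k := m) hm rfl
      (by push_cast; ring)
    have := ih (by omega)
    omega

variable [NeZero n]

lemma descRun_lt : descRun τ d i < n := by
  by_contra! h
  have := add_le_of_le_descRun (c := i) h (by simp)
  have := NeZero.pos n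
  omega

lemma descRun_pos_iff : 0 < descRun τ d i ↔ τ (i + d) < τ i := by
  refine ⟨fun h => desc_of_lt_descRun h (by simp) rfl, fun h => ?_⟩
  refine le_descRun NeZero.one_le fun k hk => ?_
  obtain rfl : k = 0 := by omega
  simpa using h

lemma descRun_eq_zero (h : ¬ τ (i + d) < τ i) : descRun τ d i = 0 :=
  Nat.eq_zero_of_not_pos (mt descRun_pos_iff.1 h)

lemma descRun_succ (h : τ (i + d) < τ i) : descRun τ d i = descRun τ d (i + d) + 1 := by
  apply le_antisymm
  · have : descRun τ d i - 1 ≤ descRun τ d (i + d) :=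
      le_descRun (by have := descRun_lt (τ := τ) (d := d) (i := i); omega) fun k hk =>
        desc_of_lt_descRun (i := i) (d := d) (k := k + 1) (by omega) (by push_cast; ring) (by ring)
    omega
  · refine le_descRun descRun_lt fun k hk => ?_
    rcases k with _ | k
    · simpa using h
    · exact desc_of_lt_descRun (i := i + d) (d := d) (k := k) (by omega) (by push_cast; ring)
        (by push_cast; ring)

lemma not_desc_at_descRun (hc : i + descRun τ d i * d = c) : ¬ τ (c + d) < τ c := by
  intro h
  have : descRun τ d i + 1 ≤ descRun τ d i := le_descRun descRun_lt fun k hk => by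
    rcases Nat.lt_or_ge k (descRun τ d i) with hk | hk
    · exact desc_of_lt_descRun hk rfl (by ring)
    · obtain rfl : k = descRun τ d i := by omega
      subst hc
      simpa only [add_mul, one_mul, add_assoc] using h
  omega

end DescRun

section Dynamics

variable (h : Bool → Bool → Bool → Bool) (τ : ZMod n → ℕ) (x : ZMod n → Bool)

lemma ecaUpTo_apply_of_lt {k : ℕ} {i : ZMod n} (hk : k < τ i) : ecaUpTo n h τ k x i = x i := by
  induction k with
  | zero => simp [ecaUpTo, ecaStep, hk.ne']
  | succ k ih => simp [ecaUpTo, ecaStep, hk.ne', ih (by omega)]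

lemma ecaUpTo_apply_of_le {k : ℕ} {i : ZMod n} (hk : τ i ≤ k) :
    ecaUpTo n h τ k x i = ecaAsync n h τ x i := by
  induction k with
  | zero => simp [ecaAsync, Nat.le_zero.1 hk]
  | succ k ih =>
    rcases hk.lt_or_eq with hk | hk
    · simp [ecaUpTo, ecaStep, hk.ne, ih (by omega)]
    · simp [ecaAsync, hk]

lemma ecaAsync_apply (i : ZMod n) :
    ecaAsync n h τ x i =
      h (if τ (i - 1) < τ i then ecaAsync n h τ x (i - 1) else x (i - 1)) (x i)
        (if τ (i + 1) < τ i then ecaAsync n h τ x (i + 1) else x (i + 1)) := by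
  rcases hτ : τ i with _ | k
  · simp [ecaAsync, hτ, ecaUpTo, ecaStep]
  · have hside : ∀ j, ecaUpTo n h τ k x j = if τ j < k + 1 then ecaAsync n h τ x j else x j :=
      fun j => by
        split_ifs with hj
        · exact ecaUpTo_apply_of_le h τ x (by omega)
        · exact ecaUpTo_apply_of_lt h τ x (by omega)
    show ecaUpTo n h τ (τ i) x i = _
    rw [hτ]
    show ecaStep n h τ (k + 1) (ecaUpTo n h τ k x) i = _
    rw [ecaStep, if_pos hτ, hside (i - 1), hside (i + 1), ecaUpTo_apply_of_lt h τ x (by omega)]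

end Dynamics

def Ray (τ : ZMod n → ℕ) (d i j : ZMod n) : Prop :=
  ∃ k ≤ descRun τ d i + 1, j = i + k * d

/-- The cells on which `f^{(τ)}(x)_i` depends for rule 128 (`ecaAsync_and_eq_true_iff`). -/
def Window (τ : ZMod n → ℕ) (i j : ZMod n) : Prop :=
  Ray τ 1 i j ∨ Ray τ (-1) i j

section Window

variable {τ : ZMod n → ℕ} {d i j : ZMod n}

lemma window_iff (hd : d = 1 ∨ d = -1) : Window τ i j ↔ Ray τ d i j ∨ Ray τ (-d) i j := by
  rcases hd with rfl | rfl
  · rfl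
  · rw [neg_neg, or_comm]; rfl

lemma ray_self : Ray τ d i i := ⟨0, by omega, by simp⟩

variable [NeZero n]

lemma ray_iff_of_desc (h : τ (i + d) < τ i) : Ray τ d i j ↔ j = i ∨ Ray τ d (i + d) j := by
  rw [Ray, Ray, descRun_succ h]
  constructor
  · rintro ⟨_ | k, hk, rfl⟩
    · simp
    · exact Or.inr ⟨k, by omega, by push_cast; ring⟩
  · rintro (rfl | ⟨k, hk, rfl⟩)
    · exact ⟨0, by omega, by simp⟩
    · exact ⟨k + 1, by omega, by push_cast; ring⟩

lemma ray_iff_of_not_desc (h : ¬ τ (i + d) < τ i) : Ray τ d i j ↔ j = i ∨ j = i + d := by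
  rw [Ray, descRun_eq_zero h]
  constructor
  · rintro ⟨k, hk, rfl⟩
    interval_cases k <;> simp
  · rintro (rfl | rfl)
    exacts [⟨0, by omega, by simp⟩, ⟨1, le_rfl, by simp⟩]

end Window

lemma ecaAsync_and_eq_true_iff [NeZero n] (τ : ZMod n → ℕ) (x : ZMod n → Bool) (i : ZMod n) :
    ecaAsync n (fun a b c => a && b && c) τ x i = true ↔
      ∀ j, Window τ i j → x j = true := by
  induction hk : τ i using Nat.strong_induction_on generalizing i with
  | _ k ih =>
    subst hk
    have side : ∀ d : ZMod n, (d = 1 ∨ d = -1) →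
        ((x i = true ∧ (if τ (i + d) < τ i
            then ecaAsync n (fun a b c => a && b && c) τ x (i + d) else x (i + d)) = true) ↔
          ∀ j, Ray τ d i j → x j = true) := by
      intro d hd
      split_ifs with hdesc
      · have hback : ¬ τ (i + d + -d) < τ (i + d) := by simpa using hdesc.le
        rw [ih _ hdesc (i + d) rfl]
        simp only [window_iff hd, ray_iff_of_desc hdesc, ray_iff_of_not_desc hback, or_imp,
          forall_and, forall_eq, add_neg_cancel_right]
        have := ray_self (τ := τ) (d := d) (i := i + d)
        tauto
      · simp [ray_iff_of_not_desc hdesc, or_imp, forall_and]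
    rw [ecaAsync_apply, sub_eq_add_neg]
    simp only [Bool.and_eq_true, Window, or_imp, forall_and, ← side 1 (by simp),
      ← side (-1) (by simp)]
    tauto

lemma window_eq_of_ecaAsync_eq [NeZero n] {τ τ' : ZMod n → ℕ}
    (heq : ecaAsync n (fun a b c => a && b && c) τ = ecaAsync n (fun a b c => a && b && c) τ') :
    Window τ = Window τ' := by
  funext i j
  have key : ∀ σ, Window σ i j ↔
      ecaAsync n (fun a b c => a && b && c) σ (fun c => decide (c ≠ j)) i = false := by
    intro σ
    rw [← Bool.not_eq_true, ecaAsync_and_eq_true_iff]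
    simp
  rw [eq_iff_iff, key, key, heq]

section Saturation

variable {τ τ' : ZMod n → ℕ} {d i : ZMod n}

lemma not_window_of_lt (hd : d = 1 ∨ d = -1) (h : descRun τ d i + descRun τ (-d) i + 3 < n) :
    ¬ Window τ i (i + (descRun τ d i + 2 : ℕ) * d) := by
  rw [window_iff hd]
  rintro (⟨k, hk, hj⟩ | ⟨k, hk, hj⟩)
  · refine natCast_mul_ne_zero hd (m := descRun τ d i + 2 - k) (by omega) (by omega) ?_
    rw [Nat.cast_sub (by omega)]
    linear_combination hj
  · refine natCast_mul_ne_zero hd (m := descRun τ d i + 2 + k) (by omega) (by omega) ?_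
    push_cast at hj ⊢
    linear_combination hj

lemma descRun_le_of_window_imp (hd : d = 1 ∨ d = -1)
    (h : descRun τ d i + descRun τ (-d) i + 3 < n)
    (hw : ∀ j, Window τ' i j → Window τ i j) :
    descRun τ' d i ≤ descRun τ d i := by
  by_contra! hlt
  exact not_window_of_lt hd h
    (hw _ ((window_iff hd).2 (Or.inl ⟨descRun τ d i + 2, by omega, rfl⟩)))


variable [NeZero n]

lemma window_of_le (hd : d = 1 ∨ d = -1) (h : n ≤ descRun τ d i + descRun τ (-d) i + 3)
    (j : ZMod n) : Window τ i j := by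
  obtain ⟨m, hm, rfl⟩ := exists_eq_add_mul hd i j
  rw [window_iff hd]
  by_cases hm' : m ≤ descRun τ d i + 1
  · exact Or.inl ⟨m, hm', rfl⟩
  · refine Or.inr ⟨n - m, by omega, ?_⟩
    rw [Nat.cast_sub hm.le, ZMod.natCast_self]
    ring

lemma descRun_eq_of_window_eq (hd : d = 1 ∨ d = -1) (hw : Window τ = Window τ')
    (h : descRun τ d i + descRun τ (-d) i + 3 < n) : descRun τ' d i = descRun τ d i := by
  have h' : descRun τ' d i + descRun τ' (-d) i + 3 < n := by
    by_contra! h'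
    exact not_window_of_lt hd h (hw ▸ window_of_le hd h' _)
  exact le_antisymm (descRun_le_of_window_imp hd h (by simp [hw]))
    (descRun_le_of_window_imp hd h' (by simp [hw]))

lemma le_of_descRun_ne (hd : d = 1 ∨ d = -1) (hw : Window τ = Window τ')
    (hne : descRun τ d i ≠ descRun τ' d i) : n ≤ descRun τ d i + descRun τ (-d) i + 3 :=
  not_lt.1 fun h => hne (descRun_eq_of_window_eq hd hw h).symm

lemma desc_iff_of_lt (hd : d = 1 ∨ d = -1) (hw : Window τ = Window τ')
    (h : descRun τ d i + descRun τ (-d) i + 3 < n) :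
    τ (i + d) < τ i ↔ τ' (i + d) < τ' i := by
  rw [← descRun_pos_iff, ← descRun_pos_iff, descRun_eq_of_window_eq hd hw h]

end Saturation

section Combinatorics

variable {τ τ' : ZMod n → ℕ} {d i : ZMod n}

lemma descRun_add_descRun_neg_lt_of_near (hn : 6 ≤ n) (h : ¬ τ i < τ (i + d))
    (hfar : ¬ τ (i + 4 * d) < τ (i + 3 * d)) {j : ℕ} (hj : 1 ≤ j) (hj3 : j ≤ 3) :
    descRun τ d (i + j * d) + descRun τ (-d) (i + j * d) + 3 < n := by
  have h1 : descRun τ d (i + j * d) ≤ 3 - j :=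
    descRun_le_of_not_lt hfar (by rw [Nat.cast_sub hj3]; push_cast; ring) (by ring)
  have h2 : descRun τ (-d) (i + j * d) ≤ j - 1 :=
    descRun_le_of_not_lt h (by rw [Nat.cast_sub hj]; push_cast; ring) (by ring)
  omega

lemma lt_of_le_descRun_neg (h : n ≤ descRun τ (-d) i + 3) {m : ℕ} (hm : 3 ≤ m)
    (hmn : m < n) :
    τ (i + m * d) < τ (i + m * d + d) :=
  desc_of_lt_descRun (i := i) (d := -d) (k := n - (m + 1)) (by omega)
    (by rw [natCast_sub_eq_neg (by omega)]; push_cast; ring) (by ring)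

variable [NeZero n]

lemma le_descRun_neg_of_desc_of_not_desc (hd : d = 1 ∨ d = -1) (hw : Window τ = Window τ')
    (h : τ (i + d) < τ i) (h' : ¬ τ' (i + d) < τ' i) : n ≤ descRun τ' (-d) i + 3 := by
  have hsat := le_of_descRun_ne hd hw.symm (i := i)
    (by rw [descRun_eq_zero h']; exact (descRun_pos_iff.2 h).ne)
  rw [descRun_eq_zero h'] at hsat
  omega

lemma not_asc_of_desc (hn : 6 ≤ n) (hd : d = 1 ∨ d = -1) (hw : Window τ = Window τ')
    (h : τ (i + d) < τ i) : ¬ τ' i < τ' (i + d) := by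
  intro h'
  have long' := le_descRun_neg_of_desc_of_not_desc hd hw h (by omega)
  have long := le_descRun_neg_of_desc_of_not_desc (neg_eq_one_or_neg_one hd) hw.symm (i := i + d)
    (by simpa using h') (by simpa using h.le)
  rw [neg_neg] at long
  have h3 : τ (i + 3 * d + d) < τ (i + 3 * d) :=
    desc_of_lt_descRun (i := i + d) (k := 2) (by omega) (by push_cast; ring) rfl
  have h3' : τ' (i + 3 * d) < τ' (i + 3 * d + d) := by
    simpa using lt_of_le_descRun_neg long' (m := 3) le_rfl (by omega)
  have long3' := le_descRun_neg_of_desc_of_not_desc hd hw h3 (by omega)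
  have up : τ' i + 3 ≤ τ' (i + 3 * d) :=
    add_le_of_le_descRun (d := -d) (by omega) (by push_cast; ring)
  have down : τ' (i + 3 * d) + (n - 3) ≤ τ' i :=
    add_le_of_le_descRun (d := -d) (by omega)
      (by rw [natCast_sub_eq_neg (by omega)]; push_cast; ring)
  omega

lemma le_descRun_neg_of_desc_of_eq (hn : 6 < n) (hd : d = 1 ∨ d = -1)
    (hw : Window τ = Window τ') (h : τ (i + d) < τ i) (h' : τ' (i + d) = τ' i) :
    n ≤ descRun τ (-d) i + 3 := by
  have hd' := neg_eq_one_or_neg_one hd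
  have long' := le_descRun_neg_of_desc_of_not_desc hd hw h (by omega)
  have hpos : 0 < descRun τ (-d) i := by
    by_contra! h0
    have hsat := le_of_descRun_ne hd hw (i := i)
      (by rw [descRun_eq_zero (τ := τ') (by omega)]; exact (descRun_pos_iff.2 h).ne')
    have h3 : τ (i + 3 * d + d) < τ (i + 3 * d) :=
      desc_of_lt_descRun (i := i) (k := 3) (by omega) (by push_cast; ring) rfl
    exact not_asc_of_desc hn.le hd hw h3 (lt_of_le_descRun_neg long' (m := 3) le_rfl (by omega))
  -- a shorter run would end at a local minimum of `τ`, whose proper window stops `τ'` there too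
  by_contra! hshort
  set m := descRun τ (-d) i
  set c := i + m * -d
  have hstop : ¬ τ (c + -d) < τ c := not_desc_at_descRun rfl
  have hturn : ¬ τ (c + - -d) < τ c := by
    have := desc_of_lt_descRun (τ := τ) (i := i) (d := -d) (k := m - 1) (c' := c) (by omega) rfl
      (by simp only [c]; rw [Nat.cast_sub hpos]; ring)
    rw [neg_neg, show c + d = i + ((m - 1 : ℕ) : ZMod n) * -d by
      simp only [c]; rw [Nat.cast_sub hpos]; ring]
    omega
  have hagree := desc_iff_of_lt hd' hw (i := c)
    (by rw [descRun_eq_zero hstop, descRun_eq_zero hturn]; omega)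
  exact hstop (hagree.2 (desc_of_lt_descRun (τ := τ') (k := m) (by omega) rfl rfl))

lemma desc_iff_and_asc_iff_of_ne (hn : 6 < n) (hd : d = 1 ∨ d = -1)
    (hw : Window τ = Window τ') (h : τ (i + d) < τ i) (h' : τ' (i + d) = τ' i)
    {c : ZMod n} (hc : c ≠ i) :
    (τ (c + d) < τ c ↔ τ' (c + d) < τ' c) ∧
      (τ c < τ (c + d) ↔ τ' c < τ' (c + d)) := by
  have long := le_descRun_neg_of_desc_of_eq hn hd hw h h'
  have long' := le_descRun_neg_of_desc_of_not_desc hd hw h (by omega)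
  obtain ⟨m, hm, rfl⟩ := exists_eq_add_mul hd i c
  have hm0 : m ≠ 0 := by rintro rfl; simp at hc
  rcases Nat.lt_or_ge m 3 with hm3 | hm3
  · have hfar : ¬ τ (i + 4 * d) < τ (i + 3 * d) := by
      have := lt_of_le_descRun_neg long (m := 3) le_rfl (by omega)
      rw [show i + ((3 : ℕ) : ZMod n) * d + d = i + 4 * d by push_cast; ring] at this
      simpa using this.le
    have near := fun j (hj : 1 ≤ j) (hj3 : j ≤ 3) =>
      descRun_add_descRun_neg_lt_of_near hn.le (lt_asymm h) hfar hj hj3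
    refine ⟨desc_iff_of_lt hd hw (near m (by omega) (by omega)), ?_⟩
    have := desc_iff_of_lt (neg_eq_one_or_neg_one hd) hw (i := i + ((m + 1 : ℕ) : ZMod n) * d)
      (by rw [neg_neg, add_comm (descRun τ (-d) _)]; exact near (m + 1) (by omega) (by omega))
    rwa [show i + ((m + 1 : ℕ) : ZMod n) * d + -d = i + m * d by push_cast; ring,
      show i + ((m + 1 : ℕ) : ZMod n) * d = i + m * d + d by push_cast; ring] at this
  · have hlt := lt_of_le_descRun_neg long hm3 hm
    have hlt' := lt_of_le_descRun_neg long' hm3 hm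
    exact ⟨iff_of_false (lt_asymm hlt) (lt_asymm hlt'), iff_of_true hlt hlt'⟩

end Combinatorics

lemma existsUnique_lab_ne {τ τ' : ZMod n → ℕ} {d i : ZMod n} (hd : d = 1 ∨ d = -1)
    (h : τ (i + d) < τ i) (h' : τ' (i + d) = τ' i)
    (hagree : ∀ c ≠ i,
      (τ (c + d) < τ c ↔ τ' (c + d) < τ' c) ∧ (τ c < τ (c + d) ↔ τ' c < τ' (c + d))) :
    ∃! p : ZMod n × ZMod n,
      (p.2 = p.1 + 1 ∨ p.2 = p.1 - 1) ∧ lab n τ p.1 p.2 ≠ lab n τ' p.1 p.2 := by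
  refine ⟨(i + d, i), ⟨by rcases hd with rfl | rfl <;> simp, ?_⟩, ?_⟩
  · simp only [lab, ne_eq, decide_eq_decide]
    omega
  · rintro ⟨a, b⟩ ⟨hab, hne⟩
    simp only [lab, ne_eq, decide_eq_decide] at hab hne
    have : b = a + d ∨ a = b + d := by
      rcases hd with rfl | rfl <;> rcases hab with rfl | rfl
      exacts [.inl rfl, .inr (by ring), .inr (by ring), .inl (by ring)]
    rcases this with rfl | rfl
    · by_cases ha : a = i
      · subst ha
        omega
      · have := (hagree a ha).2
        omega
    · by_cases hb : b = i
      · rw [hb]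
      · have := (hagree b hb).1
        omega

end ECA

/-- Rule 128: a special pair (non-equivalent schedules with the same dynamics)
differs on the labeling of exactly one arc. -/
theorem rule_128_special_pair_one_arc (n : ℕ) (hn : 6 < n) (τ τ' : ZMod n → ℕ)
    (hne : ∃ j k : ZMod n, (k = j + 1 ∨ k = j - 1) ∧ lab n τ j k ≠ lab n τ' j k)
    (heq : ecaAsync n (fun a b c => a && b && c) τ =
      ecaAsync n (fun a b c => a && b && c) τ') :
    ∃! p : ZMod n × ZMod n,
      (p.2 = p.1 + 1 ∨ p.2 = p.1 - 1) ∧ lab n τ p.1 p.2 ≠ lab n τ' p.1 p.2 := by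
  have : NeZero n := ⟨by omega⟩
  have hw := ECA.window_eq_of_ecaAsync_eq heq
  clear heq
  obtain ⟨a, b, hab, hne⟩ := hne
  obtain ⟨d, hd, rfl⟩ : ∃ d : ZMod n, (d = 1 ∨ d = -1) ∧ b = a + d := by
    rcases hab with rfl | rfl
    exacts [⟨1, by simp, rfl⟩, ⟨-1, by simp, sub_eq_add_neg a 1⟩]
  simp only [lab, ne_eq, decide_eq_decide] at hne
  wlog hle : τ (a + d) ≤ τ a generalizing τ τ'
  · simpa only [ne_comm] using this τ' τ hw.symm (by tauto) (by tauto)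
  have hasc : τ' a < τ' (a + d) := by omega
  obtain hlt | hflat := hle.lt_or_eq
  · exact absurd hasc (ECA.not_asc_of_desc hn.le hd hw hlt)
  have hd' := ECA.neg_eq_one_or_neg_one hd
  have hdesc : τ' (a + d + -d) < τ' (a + d) := by simpa using hasc
  have hflat' : τ (a + d + -d) = τ (a + d) := by simpa using hflat.symm
  simpa only [ne_comm] using ECA.existsUnique_lab_ne hd' hdesc hflat'
    fun c hc => ECA.desc_iff_and_asc_iff_of_ne hn hd' hw.symm hdesc hflat' hc
end
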